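/- Let k be a field, (A,·) an associative k-algebra, (R,∘,ℓ,r) an A-bimodule k-algebra, α, β : R → A linear maps, and λ, κ, μ ∈ k. Suppose β is balanced of mass (κ,μ), i.e. κ ℓ(β(u))v = κ u r(β(v)) and μ ℓ(β(u∘v))w = μ u r(β(v∘w)) for all u, v, w ∈ R, and that α(u)·α(v) − α(ℓ(α(u))v + u r(α(v)) + λ u∘v) = κ β(u)·β(v) + μ β(u∘v) for all u, v ∈ R. Then the product u *_α v := ℓ(α(u))v + u r(α(v)) + λ u∘v on R is associative. -/

import Mathlib

/-!
Write `Φ(u, v) = α u * α v - α (u *_α v)` for the failure of `α` to be an O-operator.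
For an arbitrary linear `α`, the bimodule-algebra axioms give
`(u *_α v) *_α w + ℓ(Φ(u, v)) w = u *_α (v *_α w) + u r(Φ(v, w))`,
so `*_α` is associative as soon as `ℓ(Φ(u, v)) w = u r(Φ(v, w))`. When
`Φ(u, v) = κ β(u)β(v) + μ β(u∘v)`, the `μ`-part of this identity is the second balance condition,
and the `κ`-part follows from the first one applied on either side of the middle factor.
-/

section BimoduleAlgebra

variable {k A R : Type*} [CommRing k]
  [NonUnitalRing A] [Module k A]
  [NonUnitalRing R] [Module k R]
  (ℓ r : A →ₗ[k] R →ₗ[k] R)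

/-- `r x v` stands for the right action `v r(x)`. -/
def starProd (α : R →ₗ[k] A) (lam : k) (u v : R) : R :=
  ℓ (α u) v + r (α v) u + lam • (u * v)

def oOperatorDefect (α : R →ₗ[k] A) (lam : k) (u v : R) : A :=
  α u * α v - α (starProd ℓ r α lam u v)

variable {ℓ r}

theorem starProd_assoc_add_defect [SMulCommClass k R R] [IsScalarTower k R R]
    (hbim1 : ∀ (x y : A) (v : R), ℓ (x * y) v = ℓ x (ℓ y v))
    (hbim2 : ∀ (x y : A) (v : R), r y (r x v) = r (x * y) v)
    (hbim3 : ∀ (x y : A) (v : R), r y (ℓ x v) = ℓ x (r y v))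
    (halg1 : ∀ (x : A) (v w : R), ℓ x (v * w) = (ℓ x v) * w)
    (halg2 : ∀ (x : A) (v w : R), r x (v * w) = v * (r x w))
    (halg3 : ∀ (x : A) (v w : R), (r x v) * w = v * (ℓ x w))
    (α : R →ₗ[k] A) (lam : k) (u v w : R) :
    starProd ℓ r α lam (starProd ℓ r α lam u v) w + ℓ (oOperatorDefect ℓ r α lam u v) w =
      starProd ℓ r α lam u (starProd ℓ r α lam v w) + r (oOperatorDefect ℓ r α lam v w) u := by
  simp only [oOperatorDefect, starProd, map_sub, map_add, map_smul, LinearMap.sub_apply,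
    LinearMap.add_apply, LinearMap.smul_apply, smul_add, smul_smul, add_mul, mul_add,
    smul_mul_assoc, mul_smul_comm, hbim1, ← hbim2, hbim3, halg1, halg2, halg3, mul_assoc]
  abel

theorem left_eq_right_of_balanced
    (hbim1 : ∀ (x y : A) (v : R), ℓ (x * y) v = ℓ x (ℓ y v))
    (hbim2 : ∀ (x y : A) (v : R), r y (r x v) = r (x * y) v)
    (hbim3 : ∀ (x y : A) (v : R), r y (ℓ x v) = ℓ x (r y v))
    (β : R →ₗ[k] A) (κ μ : k)
    (hbal1 : ∀ u v : R, κ • ℓ (β u) v = κ • r (β v) u)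
    (hbal2 : ∀ u v w : R, μ • ℓ (β (u * v)) w = μ • r (β (v * w)) u) (u v w : R) :
    ℓ (κ • (β u * β v) + μ • β (u * v)) w = r (κ • (β v * β w) + μ • β (v * w)) u := by
  have hκ : κ • ℓ (β u * β v) w = κ • r (β v * β w) u := by
    rw [hbim1, ← hbim2, ← map_smul, hbal1 v w, map_smul, ← map_smul (r (β w)), ← hbal1 u v,
      map_smul, hbim3]
  simp only [map_add, map_smul, LinearMap.add_apply, LinearMap.smul_apply, hκ, hbal2]

end BimoduleAlgebra

theorem stmt5 {k A R : Type} [Field k]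
    [NonUnitalRing A] [Module k A]
    [NonUnitalRing R] [Module k R] [SMulCommClass k R R] [IsScalarTower k R R]
    (ℓ r : A →ₗ[k] R →ₗ[k] R)
    (hbim1 : ∀ (x y : A) (v : R), ℓ (x * y) v = ℓ x (ℓ y v))
    (hbim2 : ∀ (x y : A) (v : R), r y (r x v) = r (x * y) v)
    (hbim3 : ∀ (x y : A) (v : R), r y (ℓ x v) = ℓ x (r y v))
    (halg1 : ∀ (x : A) (v w : R), ℓ x (v * w) = (ℓ x v) * w)
    (halg2 : ∀ (x : A) (v w : R), r x (v * w) = v * (r x w))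
    (halg3 : ∀ (x : A) (v w : R), (r x v) * w = v * (ℓ x w))
    (α β : R →ₗ[k] A) (lam κ μ : k)
    -- β is balanced of mass (κ, μ)
    (hbal1 : ∀ u v : R, κ • ℓ (β u) v = κ • r (β v) u)
    (hbal2 : ∀ u v w : R, μ • ℓ (β (u * v)) w = μ • r (β (v * w)) u)
    -- α is an extended O-operator of weight λ with modification β of mass (κ, μ)
    (hmain : ∀ u v : R,
      α u * α v - α (ℓ (α u) v + r (α v) u + lam • (u * v)) =
        κ • (β u * β v) + μ • β (u * v)) :
    let star : R → R → R := fun u v => ℓ (α u) v + r (α v) u + lam • (u * v)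
    ∀ u v w : R, star (star u v) w = star u (star v w) := by
  intro star u v w
  have hdefect : ∀ u v, oOperatorDefect ℓ r α lam u v = κ • (β u * β v) + μ • β (u * v) := hmain
  have h := starProd_assoc_add_defect hbim1 hbim2 hbim3 halg1 halg2 halg3 α lam u v w
  rw [hdefect, hdefect, left_eq_right_of_balanced hbim1 hbim2 hbim3 β κ μ hbal1 hbal2] at h
  exact add_right_cancel h
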